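/- arXiv:2101.11039 — 2 statements merged into one kernel-verified Lean document; each statement's English description precedes it below -/
import Mathlib

section
/- For integers n ≥ r ≥ 1 and k ≥ 0, the convolution identity ∑_{i=0}^{⌊k/2⌋} S2^{(2)}(n+i, n) · S1^{(1)}(n+1, n+1+2i−k) = S2^{(1)}(n+k, n) holds, where S1^{(l)} and S2^{(l)} denote the (l,r)-Stirling numbers of the first and second kinds with parameter l. -/
/-- The `(l,r)`-Stirling numbers of the first kind. -/
def S1 (l r : ℕ) : ℕ → ℕ → ℕ
  | n, k =>
    if _h1 : n < r then 0
    else if _h2 : n = r then (if k = r then 1 else 0)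
    else S1 l r (n - 1) (k - 1) + (n - 1) ^ l * S1 l r (n - 1) k
termination_by n _ => n
decreasing_by all_goals omega

/-- The `(l,r)`-Stirling numbers of the second kind. -/
def S2 (l r : ℕ) : ℕ → ℕ → ℕ
  | n, k =>
    if _h1 : n < r then 0
    else if _h2 : n = r then (if k = r then 1 else 0)
    else S2 l r (n - 1) (k - 1) + k ^ l * S2 l r (n - 1) k
termination_by n _ => n
decreasing_by all_goals omega



lemma S1_lt (l r n k : ℕ) (h : n < r) : S1 l r n k = 0 := by
  rw [S1]; simp [h]

lemma S2_lt (l r n k : ℕ) (h : n < r) : S2 l r n k = 0 := by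
  rw [S2]; simp [h]

lemma S1_self (l r k : ℕ) (h : ¬ r < r := by omega) : S1 l r r k = if k = r then 1 else 0 := by
  rw [S1]; simp

lemma S2_self (l r k : ℕ) : S2 l r r k = if k = r then 1 else 0 := by
  rw [S2]; simp

lemma S1_rec (l r n k : ℕ) (h : r ≤ n) :
    S1 l r (n+1) k = S1 l r n (k-1) + n ^ l * S1 l r n k := by
  rw [S1]
  simp only [show ¬ (n+1 < r) by omega, show ¬ (n+1 = r) by omega, dite_false]
  simp

lemma S2_rec (l r n k : ℕ) (h : r ≤ n) :
    S2 l r (n+1) k = S2 l r n (k-1) + k ^ l * S2 l r n k := by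
  rw [S2]
  simp only [show ¬ (n+1 < r) by omega, show ¬ (n+1 = r) by omega, dite_false]
  simp

lemma S1_zero_of_lt_r (l r : ℕ) (hr : 0 < r) : ∀ n k, k < r → S1 l r n k = 0 := by
  intro n
  induction n with
  | zero => intro k hk; exact S1_lt l r 0 k hr
  | succ m ih =>
    intro k hk
    rcases lt_or_ge (m+1) r with h | h
    · exact S1_lt l r _ k h
    rcases Nat.lt_or_ge r (m+1) with h' | h'
    · rw [S1_rec l r m k (by omega), ih _ (by omega), ih _ hk]; simp
    · have : m + 1 = r := by omega
      subst this; rw [S1_self]; simp; omega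

lemma S2_zero_of_lt_r (l r : ℕ) (hr : 0 < r) : ∀ n k, k < r → S2 l r n k = 0 := by
  intro n
  induction n with
  | zero => intro k hk; exact S2_lt l r 0 k hr
  | succ m ih =>
    intro k hk
    rcases lt_or_ge (m+1) r with h | h
    · exact S2_lt l r _ k h
    rcases Nat.lt_or_ge r (m+1) with h' | h'
    · rw [S2_rec l r m k (by omega), ih _ (by omega), ih _ hk]; simp
    · have : m + 1 = r := by omega
      subst this; rw [S2_self]; simp; omega

lemma S1_zero_of_gt (l r : ℕ) : ∀ n k, n < k → S1 l r n k = 0 := by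
  intro n
  induction n with
  | zero =>
    intro k hk
    rcases Nat.lt_or_ge 0 r with h | h
    · exact S1_lt l r 0 k h
    · have : r = 0 := by omega
      subst this; rw [S1_self _ 0 k (by omega)]; simp; omega
  | succ m ih =>
    intro k hk
    rcases lt_or_ge (m+1) r with h | h
    · exact S1_lt l r _ k h
    rcases Nat.lt_or_ge r (m+1) with h' | h'
    · rw [S1_rec l r m k (by omega), ih _ (by omega), ih _ (by omega)]; simp
    · have : m + 1 = r := by omega
      subst this; rw [S1_self]; simp; omega

lemma S2_zero_of_gt (l r : ℕ) : ∀ n k, n < k → S2 l r n k = 0 := by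
  intro n
  induction n with
  | zero =>
    intro k hk
    rcases Nat.lt_or_ge 0 r with h | h
    · exact S2_lt l r 0 k h
    · have : r = 0 := by omega
      subst this; rw [S2_self]; simp; omega
  | succ m ih =>
    intro k hk
    rcases lt_or_ge (m+1) r with h | h
    · exact S2_lt l r _ k h
    rcases Nat.lt_or_ge r (m+1) with h' | h'
    · rw [S2_rec l r m k (by omega), ih _ (by omega), ih _ (by omega)]; simp
    · have : m + 1 = r := by omega
      subst this; rw [S2_self]; simp; omega

lemma S1_diag (l r : ℕ) (hr : 0 < r) : ∀ n, r ≤ n → S1 l r n n = 1 := by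
  intro n
  induction n with
  | zero => intro h; omega
  | succ m ih =>
    intro h
    rcases Nat.lt_or_ge r (m+1) with h' | h'
    · rw [S1_rec l r m (m+1) (by omega)]
      rw [show m + 1 - 1 = m from rfl, ih (by omega), S1_zero_of_gt l r m (m+1) (by omega)]
      simp
    · have : m + 1 = r := by omega
      rw [this, S1_self]; simp

lemma S2_diag (l r : ℕ) (hr : 0 < r) : ∀ n, r ≤ n → S2 l r n n = 1 := by
  intro n
  induction n with
  | zero => intro h; omega
  | succ m ih =>
    intro h
    rcases Nat.lt_or_ge r (m+1) with h' | h'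
    · rw [S2_rec l r m (m+1) (by omega)]
      rw [show m + 1 - 1 = m from rfl, ih (by omega), S2_zero_of_gt l r m (m+1) (by omega)]
      simp
    · have : m + 1 = r := by omega
      rw [this, S2_self]; simp

lemma S2_col (l r : ℕ) (hr : 0 < r) : ∀ m, S2 l r (r + m) r = (r ^ l) ^ m := by
  intro m
  induction m with
  | zero => simp [S2_self]
  | succ m ih =>
    rw [show r + (m+1) = (r+m) + 1 from rfl, S2_rec l r (r+m) r (by omega),
      S2_zero_of_lt_r l r hr _ _ (by omega), ih]
    ring

lemma S1_eq_S2_one (r : ℕ) (hr : 0 < r) : ∀ N, r ≤ N → S1 1 r (N+1) N = S2 1 r (N+1) N := by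
  intro N hN
  induction N, hN using Nat.le_induction with
  | base =>
    rw [S1_rec 1 r r r le_rfl, S2_rec 1 r r r le_rfl, S1_self, S1_self, S2_self, S2_self]
  | succ N hN ih =>
    rw [S1_rec 1 r (N+1) (N+1) (by omega), S2_rec 1 r (N+1) (N+1) (by omega),
      show N + 1 - 1 = N from rfl, ih, S1_diag 1 r hr (N+1) (by omega),
      S2_diag 1 r hr (N+1) (by omega)]

lemma base_case (r k : ℕ) (hr : 0 < r) :
    ∑ i ∈ Finset.range (k / 2 + 1),
      S2 2 r (r + i) r * S1 1 r (r + 1) (r + 1 + 2 * i - k) = r ^ k := by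
  rw [Finset.sum_eq_single_of_mem (k/2) (Finset.self_mem_range_succ _)]
  · rw [S2_col 2 r hr, S1_rec 1 r r _ le_rfl, S1_self, S1_self]
    rcases Nat.even_or_odd k with ⟨m, hm⟩ | ⟨m, hm⟩
    · rw [if_pos (by omega), if_neg (by omega)]
      simp only [mul_zero, add_zero, mul_one, ← pow_mul]
      congr 1
      omega
    · rw [if_neg (by omega), if_pos (by omega)]
      simp only [mul_one, zero_add, pow_one, ← pow_mul, ← pow_succ]
      congr 1
      omega
  · intro i hi hne
    rw [Finset.mem_range] at hi
    rw [S1_zero_of_lt_r 1 r hr _ _ (by omega), mul_zero]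

lemma sum_ext (r n k : ℕ) (m : ℕ) (hm : k/2+1 ≤ m) :
    ∑ i ∈ Finset.range m, S2 2 r (n+i) n * S1 1 r (n+1) (n+1+2*i-k)
    = ∑ i ∈ Finset.range (k/2+1), S2 2 r (n+i) n * S1 1 r (n+1) (n+1+2*i-k) := by
  refine (Finset.sum_subset (Finset.range_subset_range.2 hm) ?_).symm
  intro i hi hni
  rw [Finset.mem_range] at hi hni
  rw [S1_zero_of_gt 1 r (n+1) _ (by omega), mul_zero]

theorem stmt12 (r n k : ℕ) (hr : 1 ≤ r) (hn : r ≤ n) :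
    ∑ i ∈ Finset.range (k / 2 + 1),
      S2 2 r (n + i) n * S1 1 r (n + 1) (n + 1 + 2 * i - k) = S2 1 r (n + k) n := by
  induction n, hn using Nat.le_induction generalizing k with
  | base => rw [base_case r k hr, S2_col 1 r hr k, pow_one]
  | succ n hn ih =>
    induction k using Nat.strong_induction_on with
    | _ k ihk =>
    rcases k with _ | _ | m
    · -- k = 0
      rw [show (0:ℕ)/2 + 1 = 1 from rfl, Finset.sum_range_one,
        show n+1+0 = n+1 from rfl,
        S2_diag 2 r hr (n+1) (by omega),
        show n+1+1+2*0-0 = n+1+1 by omega,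
        S1_diag 1 r hr (n+1+1) (by omega),
        S2_diag 1 r hr (n+1) (by omega)]
    · -- k = 1
      rw [show (1:ℕ)/2 + 1 = 1 from rfl, Finset.sum_range_one,
        show n+1+0 = n+1 from rfl,
        S2_diag 2 r hr (n+1) (by omega),
        show n+1+1+2*0-1 = n+1 by omega, one_mul,
        S1_eq_S2_one r hr (n+1) (by omega)]
    · -- k = m + 2
      have hsplit : ∀ i, S2 2 r (n+1+i) (n+1) * S1 1 r (n+1+1) (n+1+1+2*i-(m+2)) =
          S2 2 r (n+i) n * S1 1 r (n+1) (n+1+2*i-(m+2))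
          + (n+1) * (S2 2 r (n+i) n * S1 1 r (n+1) (n+2+2*i-(m+2)))
          + (n+1)^2 * (S2 2 r (n+i) (n+1) * S1 1 r (n+1+1) (n+1+1+2*i-(m+2))) := by
        intro i
        have h1 : S1 1 r (n+1+1) (n+1+1+2*i-(m+2))
            = S1 1 r (n+1) (n+1+2*i-(m+2)) + (n+1) * S1 1 r (n+1) (n+2+2*i-(m+2)) := by
          rw [S1_rec 1 r (n+1) (n+1+1+2*i-(m+2)) (by omega), pow_one,
            show n+1+1+2*i-(m+2)-1 = n+1+2*i-(m+2) by omega,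
            show n+1+1+2*i-(m+2) = n+2+2*i-(m+2) by omega]
        calc S2 2 r (n+1+i) (n+1) * S1 1 r (n+1+1) (n+1+1+2*i-(m+2))
            = (S2 2 r (n+i) n + (n+1)^2 * S2 2 r (n+i) (n+1))
              * S1 1 r (n+1+1) (n+1+1+2*i-(m+2)) := by
              rw [show n+1+i = (n+i)+1 by omega, S2_rec 2 r (n+i) (n+1) (by omega),
                show (n+1)-1 = n from rfl]
          _ = S2 2 r (n+i) n * S1 1 r (n+1+1) (n+1+1+2*i-(m+2))
              + (n+1)^2 * (S2 2 r (n+i) (n+1) * S1 1 r (n+1+1) (n+1+1+2*i-(m+2))) := by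
              ring
          _ = _ := by nth_rewrite 1 [h1]; ring
      rw [Finset.sum_congr rfl (fun i _ => hsplit i), Finset.sum_add_distrib,
        Finset.sum_add_distrib, ← Finset.mul_sum, ← Finset.mul_sum]
      have hS1 : ∑ i ∈ Finset.range ((m+2)/2+1),
          S2 2 r (n+i) n * S1 1 r (n+1) (n+1+2*i-(m+2)) = S2 1 r (n+(m+2)) n := ih (m+2)
      have hS2 : ∑ i ∈ Finset.range ((m+2)/2+1),
          S2 2 r (n+i) n * S1 1 r (n+1) (n+2+2*i-(m+2)) = S2 1 r (n+(m+1)) n := by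
        have e : ∀ i, S2 2 r (n+i) n * S1 1 r (n+1) (n+2+2*i-(m+2))
            = S2 2 r (n+i) n * S1 1 r (n+1) (n+1+2*i-(m+1)) := by
          intro i; rw [show n+2+2*i-(m+2) = n+1+2*i-(m+1) by omega]
        rw [Finset.sum_congr rfl (fun i _ => e i),
          sum_ext r n (m+1) ((m+2)/2+1) (by omega), ih (m+1)]
      have hS3 : ∑ i ∈ Finset.range ((m+2)/2+1),
          S2 2 r (n+i) (n+1) * S1 1 r (n+1+1) (n+1+1+2*i-(m+2)) = S2 1 r (n+1+m) (n+1) := by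
        rw [show (m+2)/2+1 = (m/2+1)+1 by omega, Finset.sum_range_succ']
        rw [show n+0 = n from rfl, S2_zero_of_gt 2 r n (n+1) (by omega), zero_mul, add_zero]
        have e : ∀ i, S2 2 r (n+(i+1)) (n+1) * S1 1 r (n+1+1) (n+1+1+2*(i+1)-(m+2))
            = S2 2 r (n+1+i) (n+1) * S1 1 r (n+1+1) (n+1+1+2*i-m) := by
          intro i
          rw [show n+(i+1) = n+1+i by omega, show n+1+1+2*(i+1)-(m+2) = n+1+1+2*i-m by omega]
        rw [Finset.sum_congr rfl (fun i _ => e i), ihk m (by omega)]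
      rw [hS1, hS2, hS3]
      rw [show n+1+(m+2) = (n+(m+2))+1 by omega, S2_rec 1 r (n+(m+2)) (n+1) (by omega),
        show (n+1)-1 = n from rfl,
        show n+(m+2) = (n+(m+1))+1 by omega, S2_rec 1 r (n+(m+1)) (n+1) (by omega),
        show (n+1)-1 = n from rfl, show n+1+m = n+(m+1) by omega, pow_one]
      ring
end

section
/- For integers n ≥ k ≥ 1 and l ≥ 1, the (l,r)-Stirling number of the first kind with r = 1 admits the nested-sum representation S1(n+1, k+1) = (n!)^l · ∑_{0 < j_1 < j_2 < ⋯ < j_k ≤ n} 1/(j_1 j_2 ⋯ j_k)^l. -/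
lemma S1_one (l k : ℕ) : S1 l 1 1 k = if k = 1 then 1 else 0 := by
  rw [S1]; norm_num

lemma S1_succ (l n k : ℕ) :
    S1 l 1 (n + 2) k = S1 l 1 (n + 1) (k - 1) + (n + 1) ^ l * S1 l 1 (n + 1) k := by
  rw [S1]; norm_num
  exact fun h => absurd h (by omega)

lemma S1_zero (l n : ℕ) : S1 l 1 (n + 1) 0 = 0 := by
  induction n with
  | zero => rw [S1_one]; simp
  | succ m ih => rw [S1_succ, ih]; simp

lemma key (l : ℕ) : ∀ n k, (S1 l 1 (n + 1) (k + 1) : ℚ) =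
    (n.factorial : ℚ) ^ l *
      ∑ s ∈ Finset.powersetCard k (Finset.Icc 1 n), ∏ j ∈ s, 1 / (j : ℚ) ^ l := by
  intro n
  induction n with
  | zero =>
    intro k
    cases k with
    | zero => rw [S1_one]; simp
    | succ m => rw [S1_one]; rw [Finset.powersetCard_eq_empty.2 (by simp)]; simp
  | succ n ih =>
    intro k
    have hnm : (n + 1) ∉ Finset.Icc 1 n := by simp
    have hicc : Finset.Icc 1 (n + 1) = insert (n + 1) (Finset.Icc 1 n) :=
      (Finset.insert_Icc_right_eq_Icc_add_one (by omega)).symm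
    have hfac : ((n + 1).factorial : ℚ) ^ l = ((n : ℚ) + 1) ^ l * (n.factorial : ℚ) ^ l := by
      rw [Nat.factorial_succ]; push_cast
      rw [show ((n:ℚ) + 1) * (n.factorial : ℚ) = (n.factorial : ℚ) * ((n:ℚ)+1) by ring, mul_pow]
      ring
    have hne : ((n : ℚ) + 1) ^ l ≠ 0 := by positivity
    cases k with
    | zero =>
      rw [S1_succ]
      simp only [Nat.add_sub_cancel, S1_zero]
      push_cast [ih 0]
      rw [Finset.powersetCard_zero, Finset.powersetCard_zero] at *
      simp only [Finset.sum_singleton, Finset.prod_empty, mul_one] at *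
      rw [hfac]; ring
    | succ m =>
      rw [S1_succ]
      push_cast [ih m, ih (m + 1)]
      rw [hicc, Finset.powersetCard_succ_insert hnm]
      rw [Finset.sum_union]
      · rw [Finset.sum_image (fun s hs t ht h => by
          have hs' : (n+1) ∉ s := fun h' => hnm ((Finset.mem_powersetCard.1 hs).1 h')
          have ht' : (n+1) ∉ t := fun h' => hnm ((Finset.mem_powersetCard.1 ht).1 h')
          have h2 := congrArg (fun u => Finset.erase u (n+1)) h
          simpa [Finset.erase_insert hs', Finset.erase_insert ht'] using h2)]
        have hprod : ∀ s ∈ Finset.powersetCard m (Finset.Icc 1 n),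
            ∏ j ∈ insert (n + 1) s, 1 / (j : ℚ) ^ l =
              (1 / ((n : ℚ) + 1) ^ l) * ∏ j ∈ s, 1 / (j : ℚ) ^ l := by
          intro s hs
          have hs' : (n+1) ∉ s := fun h' => hnm ((Finset.mem_powersetCard.1 hs).1 h')
          rw [Finset.prod_insert hs']
          push_cast; ring
        rw [Finset.sum_congr rfl hprod, ← Finset.mul_sum, hfac]
        field_simp
        ring
      · rw [Finset.disjoint_right]
        intro s hs hs'
        obtain ⟨t, ht, rfl⟩ := Finset.mem_image.1 hs
        have := (Finset.mem_powersetCard.1 hs').1 (Finset.mem_insert_self (n+1) t)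
        exact hnm this

theorem stmt15 (l n k : ℕ) (hk : 1 ≤ k) (hn : k ≤ n) (hl : 1 ≤ l) :
    (S1 l 1 (n + 1) (k + 1) : ℚ) =
      (n.factorial : ℚ) ^ l *
        ∑ s ∈ Finset.powersetCard k (Finset.Icc 1 n), ∏ j ∈ s, 1 / (j : ℚ) ^ l := by
  exact key l n k
end
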